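/- The benchmark exact solution satisfies the generalised tangential interface condition v_ff·τ = ε N_τ^{bl} (τ·T(v_ff,p_ff)n) + ε² M_τ^{1,bl} ∂p_pm/∂x₁ on Γ with boundary layer constants N_τ^{bl} = −1/π and M_τ^{1,bl} = −2k(1 + ε/2)/(πε²): for every k > 0, ε > 0 and every x₁ ∈ ℝ, u_ff(x₁, 1/2) = ε·(−1/π)·(−∂u_ff/∂x₂(x₁, 1/2)) + ε²·(−2k(1+ε/2)/(πε²))·∂p_pm/∂x₁(x₁, 1/2), where u_ff is the first component of v_ff. -/

import Mathlib

open Real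

/-! On the interface `x₂ = 1/2` every term carries the common factor
`sin (π x₁ / 2) · √2 / 2`: the shear term contributes `-ε/2` of it and the pressure term
`1 + ε/2`, since the `k` in `M_τ^{1,bl}` cancels the `1/k` of the Darcy pressure and the `π`
cancels the chain-rule factor `π/2`. -/

lemma hasDerivAt_cos_mul_div (a b x : ℝ) :
    HasDerivAt (fun t : ℝ => cos (a * t / b)) (-sin (a * x / b) * (a / b)) x := by
  have hlin : HasDerivAt (fun t : ℝ => a * t / b) (a / b) x := by
    simpa using ((hasDerivAt_id x).const_mul a).div_const b
  exact hlin.cos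

/-- First component `u_ff` of the free-flow velocity. -/
noncomputable def benchmarkFreeFlowU (x₁ x₂ : ℝ) : ℝ :=
  sin (π * x₁ / 2) * cos (π * x₂ / 2)

noncomputable def benchmarkPorousPressure (k x₁ x₂ : ℝ) : ℝ :=
  √2 / 2 * cos (π * x₁ / 2) * exp (x₂ - 1 / 2) / k

lemma benchmarkFreeFlowU_interface (x₁ : ℝ) :
    benchmarkFreeFlowU x₁ (1 / 2) = sin (π * x₁ / 2) * (√2 / 2) := by
  rw [benchmarkFreeFlowU, show π * (1 / 2 : ℝ) / 2 = π / 4 by ring, cos_pi_div_four]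

lemma deriv_benchmarkFreeFlowU_snd (x₁ x₂ : ℝ) :
    deriv (fun t => benchmarkFreeFlowU x₁ t) x₂
      = -(π / 2) * sin (π * x₁ / 2) * sin (π * x₂ / 2) := by
  unfold benchmarkFreeFlowU
  rw [((hasDerivAt_cos_mul_div π 2 x₂).const_mul (sin (π * x₁ / 2))).deriv]
  ring

lemma deriv_benchmarkPorousPressure_fst (k x₁ x₂ : ℝ) :
    deriv (fun t => benchmarkPorousPressure k t x₂) x₁
      = -(π / 2) * (√2 / 2) * sin (π * x₁ / 2) * exp (x₂ - 1 / 2) / k := by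
  unfold benchmarkPorousPressure
  rw [((((hasDerivAt_cos_mul_div π 2 x₁).const_mul (√2 / 2)).mul_const
    (exp (x₂ - 1 / 2))).div_const k).deriv]
  ring

/-- The benchmark exact solution satisfies the generalised tangential interface
condition on `Γ = (0,1)×{1/2}` with `N_τ^{bl} = −1/π` and
`M_τ^{1,bl} = −2k(1+ε/2)/(πε²)`: for every `k > 0`, `ε > 0` and every `x₁ ∈ ℝ`,
`u_ff(x₁,1/2) = ε·(−1/π)·(−∂u_ff/∂x₂(x₁,1/2)) + ε²·(−2k(1+ε/2)/(πε²))·∂p_pm/∂x₁(x₁,1/2)`. -/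
theorem benchmark_tangential_interface_condition (k ε : ℝ) (hk : 0 < k) (hε : 0 < ε)
    (x₁ : ℝ) :
    Real.sin (π * x₁ / 2) * Real.cos (π * (1 / 2 : ℝ) / 2)
      = ε * (-1 / π)
          * (-(deriv (fun t : ℝ => Real.sin (π * x₁ / 2) * Real.cos (π * t / 2)) (1 / 2)))
        + ε ^ 2 * (-(2 * k * (1 + ε / 2)) / (π * ε ^ 2))
          * deriv
              (fun t : ℝ =>
                Real.sqrt 2 / 2 * Real.cos (π * t / 2) * Real.exp ((1 / 2 : ℝ) - 1 / 2) / k)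
              x₁ := by
  change benchmarkFreeFlowU x₁ (1 / 2)
      = ε * (-1 / π) * (-deriv (fun t => benchmarkFreeFlowU x₁ t) (1 / 2))
        + ε ^ 2 * (-(2 * k * (1 + ε / 2)) / (π * ε ^ 2))
          * deriv (fun t => benchmarkPorousPressure k t (1 / 2)) x₁
  rw [deriv_benchmarkFreeFlowU_snd, deriv_benchmarkPorousPressure_fst,
    benchmarkFreeFlowU_interface,
    show π * (1 / 2 : ℝ) / 2 = π / 4 by ring, sin_pi_div_four, sub_self, exp_zero]
  field_simp
  ring
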